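/- arXiv:2505.11877 — 4 statements merged into one kernel-verified Lean document; each statement's English description precedes it below -/
import Mathlib

section
/- Let f_h and f_l be likelihood-ratio experiments on [a_h,b_h] and [a_l,b_l] respectively, with 0 ≤ a_h < a_l < b_l < b_h ≤ ∞, and write f_{t,0} = f_t, f_{t,1}(ℓ) = ℓ·f_t(ℓ), F_{t,s}(ℓ) = ∫₀^ℓ f_{t,s}(u) du. Assume that for each state s ∈ {0,1} and each ℓ ∈ (a_l,b_l): f_{l,s}(ℓ)/F_{l,s}(ℓ) > f_{h,s}(ℓ)/F_{h,s}(ℓ) and f_{l,s}(ℓ)/(1−F_{l,s}(ℓ)) > f_{h,s}(ℓ)/(1−F_{h,s}(ℓ)). Fix μ ∈ [1/2,1), define H_{t,s}(β) = F_{t,s}((1−μ)β/(μ(1−β))) for β ∈ [0,1), and belief bounds β̲_t = μa_t/(μa_t+1−μ), β̄_t = μb_t/(μb_t+1−μ). Then for each state s ∈ {0,1} there exists a unique β†_s ∈ (β̲_l, β̄_l) such that for every β ∈ (β̲_h, β̄_h): H_{h,s}(β) − H_{l,s}(β) > 0 if β < β†_s, = 0 if β = β†_s, and < 0 if β > β†_s.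 -/
open MeasureTheory Set

/-- State-0 CDF of a likelihood-ratio experiment. -/
noncomputable def F0 (f : ℝ → ℝ) (ℓ : ℝ) : ℝ := ∫ u in (0:ℝ)..ℓ, f u

/-- State-1 CDF of a likelihood-ratio experiment. -/
noncomputable def F1 (f : ℝ → ℝ) (ℓ : ℝ) : ℝ := ∫ u in (0:ℝ)..ℓ, u * f u

/-- State-`s` CDF, `s ∈ {0,1}`. -/
noncomputable def Fs (f : ℝ → ℝ) (s : Fin 2) (ℓ : ℝ) : ℝ :=
  if s = 0 then F0 f ℓ else F1 f ℓ

/-- State-`s` density, `s ∈ {0,1}`: `f` in state 0 and `ℓ·f(ℓ)` in state 1. -/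
noncomputable def fs (f : ℝ → ℝ) (s : Fin 2) (ℓ : ℝ) : ℝ :=
  if s = 0 then f ℓ else ℓ * f ℓ

/-- A likelihood-ratio experiment on `[a, b]` with `0 ≤ a < b ≤ ∞`. -/
structure IsLRExperiment (f : ℝ → ℝ) (a : ℝ) (b : EReal) : Prop where
  a_nonneg : 0 ≤ a
  a_lt_b : (a : EReal) < b
  cont : Continuous f
  pos : ∀ ℓ : ℝ, a < ℓ → (ℓ : EReal) < b → 0 < f ℓ
  zero_outside : ∀ ℓ : ℝ, (ℓ < a ∨ b < (ℓ : EReal)) → f ℓ = 0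
  int_one : (∫ ℓ in Ioi (0:ℝ), f ℓ) = 1
  int_mean : (∫ ℓ in Ioi (0:ℝ), ℓ * f ℓ) = 1

/-- The low type's experiment is noisier: reverse-hazard-rate and hazard-rate dominance
in each state on the interior of the low type's support. -/
def Noisier (fh fl : ℝ → ℝ) (a_l b_l : ℝ) : Prop :=
  ∀ s : Fin 2, ∀ ℓ : ℝ, a_l < ℓ → ℓ < b_l →
    fs fl s ℓ / Fs fl s ℓ > fs fh s ℓ / Fs fh s ℓ ∧
    fs fl s ℓ / (1 - Fs fl s ℓ) > fs fh s ℓ / (1 - Fs fh s ℓ)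

/-- Likelihood-ratio cutoff corresponding to belief `β` under prior `μ`:
`z(β) = (1−μ)β/(μ(1−β))`. -/
noncomputable def zOf (μ β : ℝ) : ℝ := (1 - μ) * β / (μ * (1 - β))

/-- Distribution of the posterior state belief conditional on state `s`:
`H_{t,s}(β) = F_{t,s}((1−μ)β/(μ(1−β)))`. -/
noncomputable def H (f : ℝ → ℝ) (μ : ℝ) (s : Fin 2) (β : ℝ) : ℝ :=
  Fs f s (zOf μ β)

/-- Posterior belief induced by likelihood ratio `x` under prior `μ`:
`betaOf μ x = μx/(μx + 1 − μ)`.  For `x = a_t` (resp. `x = b_t`) this is the lowest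
(resp. highest) posterior belief `β̲_t` (resp. `β̄_t`) of type `t`. -/
noncomputable def betaOf (μ x : ℝ) : ℝ := μ * x / (μ * x + 1 - μ)

/-!
In likelihood-ratio space the difference `F_{h,s} - F_{l,s}` is positive at `a_l`, where
`F_{l,s}` vanishes, and negative at `b_l`, where `F_{l,s} = 1 > F_{h,s}`, so it has a zero `ℓ†`.
Reverse-hazard-rate dominance says that `(log (F_{h,s} / F_{l,s}))' < 0` on `(a_l, b_l)`, so the
ratio `F_{h,s} / F_{l,s}` crosses `1` only at `ℓ†`; outside `(a_l, b_l)` the sign is fixed by the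
supports. Finally `β ↦ z(β)` is strictly increasing on `[0, 1)` with inverse `betaOf μ`, so
`β† = betaOf μ ℓ†` is the crossing point in belief space.
-/

section Sign

variable {α β : Type*} [AddCommGroup α] [LinearOrder α] [IsOrderedAddMonoid α]
  [AddCommGroup β] [LinearOrder β] [IsOrderedAddMonoid β]

lemma StrictMonoOn.sign_sub {f : α → β} {s : Set α} (hf : StrictMonoOn f s) {x y : α}
    (hx : x ∈ s) (hy : y ∈ s) : SignType.sign (f x - f y) = SignType.sign (x - y) := by
  rcases lt_trichotomy x y with h | rfl | h
  · rw [sign_neg (sub_neg.2 (hf hx hy h)), sign_neg (sub_neg.2 h)]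
  · simp
  · rw [sign_pos (sub_pos.2 (hf hy hx h)), sign_pos (sub_pos.2 h)]

lemma StrictAntiOn.sign_sub {f : α → β} {s : Set α} (hf : StrictAntiOn f s) {x y : α}
    (hx : x ∈ s) (hy : y ∈ s) : SignType.sign (f x - f y) = SignType.sign (y - x) := by
  simpa [neg_add_eq_sub] using hf.neg.sign_sub hy hx

lemma sign_sub_one_div {K : Type*} [Field K] [LinearOrder K] [IsStrictOrderedRing K] {x y : K}
    (hy : 0 < y) : SignType.sign (x / y - 1) = SignType.sign (x - y) := by
  rw [div_sub_one hy.ne', div_eq_mul_inv, sign_mul, sign_pos (inv_pos.2 hy), mul_one]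

lemma lt_and_eq_and_gt_of_sign_eq {x c b : α}
    (h : SignType.sign x = SignType.sign (c - b)) :
    (b < c → x > 0) ∧ (b = c → x = 0) ∧ (c < b → x < 0) := by
  rw [gt_iff_lt]
  refine ⟨fun hbc => ?_, fun hbc => ?_, fun hbc => ?_⟩
  · rwa [← sign_eq_one_iff, h, sign_eq_one_iff, sub_pos]
  · rwa [← sign_eq_zero_iff, h, sign_eq_zero_iff, sub_eq_zero, eq_comm]
  · rwa [← sign_eq_neg_one_iff, h, sign_eq_neg_one_iff, sub_neg]

end Sign

lemma strictAntiOn_div_of_div_lt_div {u v u' v' : ℝ → ℝ} {a b : ℝ}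
    (hu : ∀ x ∈ Ioo a b, HasDerivAt u (u' x) x) (hv : ∀ x ∈ Ioo a b, HasDerivAt v (v' x) x)
    (hu_pos : ∀ x ∈ Ioo a b, 0 < u x) (hv_pos : ∀ x ∈ Ioo a b, 0 < v x)
    (h : ∀ x ∈ Ioo a b, u' x / u x < v' x / v x) :
    StrictAntiOn (fun x => u x / v x) (Ioo a b) := by
  have hderiv : ∀ x ∈ Ioo a b,
      HasDerivAt (fun x => u x / v x) ((u' x * v x - u x * v' x) / v x ^ 2) x :=
    fun x hx => (hu x hx).div (hv x hx) (hv_pos x hx).ne'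
  refine strictAntiOn_of_deriv_neg (convex_Ioo a b)
    (fun x hx => (hderiv x hx).continuousAt.continuousWithinAt) fun x hx => ?_
  rw [interior_Ioo] at hx
  have hx' := h x hx
  rw [div_lt_div_iff₀ (hu_pos x hx) (hv_pos x hx)] at hx'
  rw [(hderiv x hx).deriv]
  exact div_neg_of_neg_of_pos (by linarith) (pow_pos (hv_pos x hx) 2)

structure IsDensityOn (g : ℝ → ℝ) (a : ℝ) (b : EReal) : Prop where
  nonneg_left : 0 ≤ a
  left_lt_right : (a : EReal) < b
  continuous : Continuous g
  nonneg : ∀ x, 0 ≤ g x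
  pos : ∀ x : ℝ, a < x → (x : EReal) < b → 0 < g x
  eq_zero_of_le : ∀ x ≤ a, g x = 0
  eq_zero_of_ge : ∀ x : ℝ, b ≤ x → g x = 0
  integral_Ioi_zero : ∫ x in Ioi 0, g x = 1

noncomputable def cdfOf (g : ℝ → ℝ) (ℓ : ℝ) : ℝ := ∫ u in (0:ℝ)..ℓ, g u

namespace IsDensityOn

variable {g : ℝ → ℝ} {a : ℝ} {b : EReal} {ℓ : ℝ}

lemma hasDerivAt_cdfOf (hg : IsDensityOn g a b) (ℓ : ℝ) : HasDerivAt (cdfOf g) (g ℓ) ℓ :=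
  (hg.continuous.integral_hasStrictDerivAt 0 ℓ).hasDerivAt

lemma continuous_cdfOf (hg : IsDensityOn g a b) : Continuous (cdfOf g) :=
  continuous_iff_continuousAt.2 fun ℓ => (hg.hasDerivAt_cdfOf ℓ).continuousAt

lemma integrableOn_Ioi_zero (hg : IsDensityOn g a b) : IntegrableOn g (Ioi 0) := by
  by_contra h
  simpa [integral_undef h] using hg.integral_Ioi_zero

lemma cdfOf_eq_one_sub (hg : IsDensityOn g a b) (hℓ : 0 ≤ ℓ) :
    cdfOf g ℓ = 1 - ∫ x in Ioi ℓ, g x := by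
  have hsplit : ∫ x in Ioi 0, g x = (∫ x in Ioc 0 ℓ, g x) + ∫ x in Ioi ℓ, g x := by
    rw [← Ioc_union_Ioi_eq_Ioi hℓ]
    exact setIntegral_union (Ioc_disjoint_Ioi le_rfl) measurableSet_Ioi
      (hg.integrableOn_Ioi_zero.mono_set Ioc_subset_Ioi_self)
      (hg.integrableOn_Ioi_zero.mono_set (Ioi_subset_Ioi hℓ))
  rw [cdfOf, intervalIntegral.integral_of_le hℓ]
  linarith [hg.integral_Ioi_zero]

lemma cdfOf_eq_zero (hg : IsDensityOn g a b) (hℓ : ℓ ≤ a) : cdfOf g ℓ = 0 := by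
  rw [cdfOf, intervalIntegral.integral_congr (g := fun _ => 0), intervalIntegral.integral_zero]
  exact fun x hx => hg.eq_zero_of_le x (hx.2.trans (max_le hg.nonneg_left hℓ))

lemma cdfOf_pos (hg : IsDensityOn g a b) (h₁ : a < ℓ) (h₂ : (ℓ : EReal) < b) :
    0 < cdfOf g ℓ := by
  have hint : ∀ x y, IntervalIntegrable g volume x y := hg.continuous.intervalIntegrable
  rw [cdfOf, ← intervalIntegral.integral_add_adjacent_intervals (hint 0 a) (hint a ℓ),
    ← cdfOf, hg.cdfOf_eq_zero le_rfl, zero_add]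
  exact intervalIntegral.intervalIntegral_pos_of_pos_on (hint a ℓ)
    (fun x hx => hg.pos x hx.1 (lt_trans (EReal.coe_lt_coe_iff.2 hx.2) h₂)) h₁

lemma cdfOf_eq_one (hg : IsDensityOn g a b) (hℓ : b ≤ ℓ) : cdfOf g ℓ = 1 := by
  have haℓ : a ≤ ℓ := EReal.coe_le_coe_iff.1 (hg.left_lt_right.trans_le hℓ).le
  rw [hg.cdfOf_eq_one_sub (hg.nonneg_left.trans haℓ),
    setIntegral_congr_fun measurableSet_Ioi (g := fun _ => 0)
      fun x hx => hg.eq_zero_of_ge x (hℓ.trans (EReal.coe_le_coe_iff.2 (le_of_lt hx)))]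
  simp

lemma cdfOf_lt_one (hg : IsDensityOn g a b) (hℓ : (ℓ : EReal) < b) : cdfOf g ℓ < 1 := by
  rcases le_or_gt ℓ a with haℓ | haℓ
  · rw [hg.cdfOf_eq_zero haℓ]
    exact one_pos
  obtain ⟨d, hℓd, hdb⟩ := EReal.lt_iff_exists_real_btwn.1 hℓ
  have hℓd : ℓ < d := EReal.coe_lt_coe_iff.1 hℓd
  have hℓ0 : 0 ≤ ℓ := hg.nonneg_left.trans haℓ.le
  have hpos : 0 < ∫ x in Ioc ℓ d, g x := by
    rw [← intervalIntegral.integral_of_le hℓd.le]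
    exact intervalIntegral.intervalIntegral_pos_of_pos_on
      (hg.continuous.intervalIntegrable _ _)
      (fun x hx => hg.pos x (haℓ.trans hx.1) (lt_trans (EReal.coe_lt_coe_iff.2 hx.2) hdb)) hℓd
  have hmono : ∫ x in Ioc ℓ d, g x ≤ ∫ x in Ioi ℓ, g x :=
    setIntegral_mono_set (hg.integrableOn_Ioi_zero.mono_set (Ioi_subset_Ioi hℓ0))
      (Filter.Eventually.of_forall hg.nonneg) (Filter.Eventually.of_forall Ioc_subset_Ioi_self)
  linarith [hg.cdfOf_eq_one_sub hℓ0]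

lemma id_mul (hg : IsDensityOn g a b) (hmean : ∫ x in Ioi 0, x * g x = 1) :
    IsDensityOn (fun x => x * g x) a b where
  nonneg_left := hg.nonneg_left
  left_lt_right := hg.left_lt_right
  continuous := continuous_id.mul hg.continuous
  nonneg x := by
    rcases le_or_gt x a with hx | hx
    · simp [hg.eq_zero_of_le x hx]
    · exact mul_nonneg (hg.nonneg_left.trans hx.le) (hg.nonneg x)
  pos x h₁ h₂ := mul_pos (hg.nonneg_left.trans_lt h₁) (hg.pos x h₁ h₂)
  eq_zero_of_le x hx := by simp [hg.eq_zero_of_le x hx]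
  eq_zero_of_ge x hx := by simp [hg.eq_zero_of_ge x hx]
  integral_Ioi_zero := hmean

end IsDensityOn

theorem exists_sign_cdfOf_sub_eq {gh gl : ℝ → ℝ} {a_h a_l b_l : ℝ} {b_h : EReal}
    (hh : IsDensityOn gh a_h b_h) (hl : IsDensityOn gl a_l b_l) (hab : a_h < a_l)
    (hbb : (b_l : EReal) < b_h)
    (hdom : ∀ ℓ ∈ Ioo a_l b_l, gh ℓ / cdfOf gh ℓ < gl ℓ / cdfOf gl ℓ) :
    ∃ ld ∈ Ioo a_l b_l, ∀ ℓ : ℝ, a_h < ℓ → (ℓ : EReal) < b_h →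
      SignType.sign (cdfOf gh ℓ - cdfOf gl ℓ) = SignType.sign (ld - ℓ) := by
  have hlb : ∀ ℓ : ℝ, ℓ < b_l → (ℓ : EReal) < b_h := fun ℓ hℓ =>
    (EReal.coe_lt_coe_iff.2 hℓ).trans hbb
  have hFl : ∀ ℓ ∈ Ioo a_l b_l, 0 < cdfOf gl ℓ := fun ℓ hℓ =>
    hl.cdfOf_pos hℓ.1 (EReal.coe_lt_coe_iff.2 hℓ.2)
  have hFh : ∀ ℓ ∈ Ioo a_l b_l, 0 < cdfOf gh ℓ := fun ℓ hℓ =>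
    hh.cdfOf_pos (hab.trans hℓ.1) (hlb ℓ hℓ.2)
  have hanti : StrictAntiOn (fun ℓ => cdfOf gh ℓ / cdfOf gl ℓ) (Ioo a_l b_l) :=
    strictAntiOn_div_of_div_lt_div (fun ℓ _ => hh.hasDerivAt_cdfOf ℓ)
      (fun ℓ _ => hl.hasDerivAt_cdfOf ℓ) hFh hFl hdom
  have hal : 0 < cdfOf gh a_l - cdfOf gl a_l := by
    rw [hl.cdfOf_eq_zero le_rfl, sub_zero]
    exact hh.cdfOf_pos hab (hlb a_l (EReal.coe_lt_coe_iff.1 hl.left_lt_right))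
  have hbl : cdfOf gh b_l - cdfOf gl b_l < 0 := by
    rw [hl.cdfOf_eq_one le_rfl, sub_neg]
    exact hh.cdfOf_lt_one hbb
  obtain ⟨ld, hld, hcross⟩ := intermediate_value_Ioo'
    (EReal.coe_lt_coe_iff.1 hl.left_lt_right).le
    (hh.continuous_cdfOf.sub hl.continuous_cdfOf).continuousOn ⟨hbl, hal⟩
  have hratio : cdfOf gh ld / cdfOf gl ld = 1 :=
    (div_eq_one_iff_eq (hFl ld hld).ne').2 (sub_eq_zero.1 hcross)
  refine ⟨ld, hld, fun ℓ hℓh hℓb => ?_⟩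
  rcases le_or_gt ℓ a_l with hℓ | hℓ
  · rw [hl.cdfOf_eq_zero hℓ, sub_zero, sign_pos (hh.cdfOf_pos hℓh hℓb),
      sign_pos (sub_pos.2 (hℓ.trans_lt hld.1))]
  rcases le_or_gt b_l ℓ with hℓ' | hℓ'
  · rw [hl.cdfOf_eq_one (EReal.coe_le_coe_iff.2 hℓ'), sign_neg (sub_neg.2 (hh.cdfOf_lt_one hℓb)),
      sign_neg (sub_neg.2 (hld.2.trans_le hℓ'))]
  calc SignType.sign (cdfOf gh ℓ - cdfOf gl ℓ)
      = SignType.sign (cdfOf gh ℓ / cdfOf gl ℓ - cdfOf gh ld / cdfOf gl ld) := by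
        rw [hratio, sign_sub_one_div (hFl ℓ ⟨hℓ, hℓ'⟩)]
    _ = SignType.sign (ld - ℓ) := hanti.sign_sub ⟨hℓ, hℓ'⟩ hld

namespace IsLRExperiment

variable {f : ℝ → ℝ} {a : ℝ} {b : EReal}

lemma eq_zero_of_le (h : IsLRExperiment f a b) {ℓ : ℝ} (hℓ : ℓ ≤ a) : f ℓ = 0 := by
  have hIio : EqOn f 0 (Iio a) := fun x hx => h.zero_outside x (Or.inl hx)
  exact (closure_Iio a ▸ hIio.closure h.cont continuous_const) hℓ

lemma eq_zero_of_ge (h : IsLRExperiment f a b) {ℓ : ℝ} (hℓ : b ≤ ℓ) : f ℓ = 0 := by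
  have hIoi : EqOn f 0 (Ioi ℓ) := fun x hx =>
    h.zero_outside x (Or.inr (hℓ.trans_lt (EReal.coe_lt_coe_iff.2 hx)))
  exact (closure_Ioi ℓ ▸ hIoi.closure h.cont continuous_const) (mem_Ici.2 le_rfl)

lemma isDensityOn (h : IsLRExperiment f a b) : IsDensityOn f a b where
  nonneg_left := h.a_nonneg
  left_lt_right := h.a_lt_b
  continuous := h.cont
  nonneg x := by
    rcases le_or_gt x a with hxa | hxa
    · exact (h.eq_zero_of_le hxa).ge
    rcases lt_or_ge (x : EReal) b with hxb | hxb
    · exact (h.pos x hxa hxb).le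
    · exact (h.eq_zero_of_ge hxb).ge
  pos := h.pos
  eq_zero_of_le _ := h.eq_zero_of_le
  eq_zero_of_ge _ := h.eq_zero_of_ge
  integral_Ioi_zero := h.int_one

lemma isDensityOn_fs (h : IsLRExperiment f a b) (s : Fin 2) : IsDensityOn (fs f s) a b := by
  revert s
  rw [Fin.forall_fin_two]
  exact ⟨h.isDensityOn, h.isDensityOn.id_mul h.int_mean⟩

end IsLRExperiment

lemma Fs_eq_cdfOf (f : ℝ → ℝ) (s : Fin 2) : Fs f s = cdfOf (fs f s) := by
  revert s
  rw [Fin.forall_fin_two]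
  exact ⟨rfl, rfl⟩

section Belief

variable {μ x β : ℝ}

lemma betaOf_denom_pos (hμ : μ ∈ Ioo 0 1) (hx : 0 ≤ x) : 0 < μ * x + 1 - μ := by
  nlinarith [hμ.1, hμ.2]

lemma betaOf_lt_one (hμ : μ ∈ Ioo 0 1) (hx : 0 ≤ x) : betaOf μ x < 1 := by
  rw [betaOf, div_lt_one (betaOf_denom_pos hμ hx)]
  linarith [hμ.2]

lemma zOf_betaOf (hμ : μ ∈ Ioo 0 1) (hx : 0 ≤ x) : zOf μ (betaOf μ x) = x := by
  have hμ₀ : μ ≠ 0 := hμ.1.ne'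
  have hμ₁ : 1 - μ ≠ 0 := (sub_pos.2 hμ.2).ne'
  have hD : μ * x + 1 - μ ≠ 0 := (betaOf_denom_pos hμ hx).ne'
  rw [zOf, betaOf, one_sub_div hD,
    show μ * x + 1 - μ - μ * x = 1 - μ by ring]
  field_simp

lemma strictMonoOn_betaOf (hμ : μ ∈ Ioo 0 1) : StrictMonoOn (betaOf μ) (Ici 0) := by
  intro x hx y hy hxy
  rw [betaOf, betaOf, div_lt_div_iff₀ (betaOf_denom_pos hμ hx) (betaOf_denom_pos hμ hy)]
  nlinarith [mul_pos (mul_pos hμ.1 (sub_pos.2 hμ.2)) (sub_pos.2 hxy)]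

lemma strictMonoOn_zOf (hμ : μ ∈ Ioo 0 1) : StrictMonoOn (zOf μ) (Iio 1) := by
  intro x hx y hy hxy
  have hx1 : x < 1 := hx
  have hy1 : y < 1 := hy
  rw [zOf, zOf, div_lt_div_iff₀ (by nlinarith [hμ.1]) (by nlinarith [hμ.1])]
  nlinarith [mul_pos (mul_pos hμ.1 (sub_pos.2 hμ.2)) (sub_pos.2 hxy)]

lemma lt_zOf_iff (hμ : μ ∈ Ioo 0 1) (hx : 0 ≤ x) (hβ : β < 1) :
    x < zOf μ β ↔ betaOf μ x < β := by
  conv_lhs => rw [← zOf_betaOf hμ hx]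
  exact (strictMonoOn_zOf hμ).lt_iff_lt (betaOf_lt_one hμ hx) hβ

lemma zOf_lt_iff (hμ : μ ∈ Ioo 0 1) (hx : 0 ≤ x) (hβ : β < 1) :
    zOf μ β < x ↔ β < betaOf μ x := by
  conv_lhs => rw [← zOf_betaOf hμ hx]
  exact (strictMonoOn_zOf hμ).lt_iff_lt hβ (betaOf_lt_one hμ hx)

lemma sign_sub_zOf (hμ : μ ∈ Ioo 0 1) (hx : 0 ≤ x) (hβ : β < 1) :
    SignType.sign (x - zOf μ β) = SignType.sign (betaOf μ x - β) := by
  conv_lhs => rw [← zOf_betaOf hμ hx]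
  exact (strictMonoOn_zOf hμ).sign_sub (betaOf_lt_one hμ hx) hβ

end Belief

/-- Single-crossing Lemma: in each state `s` there is a unique crossing belief
`β†_s ∈ (β̲_l, β̄_l)` at which `H_{h,s} − H_{l,s}` changes sign from positive to negative
over the high type's belief range `(β̲_h, β̄_h)` (the condition `β < β̄_h` is expressed as
`β < 1` together with `z(β) < b_h`, which also covers the case `b_h = ∞`). -/
theorem stmt_1 (fh fl : ℝ → ℝ) (a_h a_l b_l : ℝ) (b_h : EReal)
    (hh : IsLRExperiment fh a_h b_h) (hl : IsLRExperiment fl a_l (b_l : EReal))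
    (hab : a_h < a_l) (hbb : (b_l : EReal) < b_h)
    (hdom : Noisier fh fl a_l b_l)
    (μ : ℝ) (hμ : μ ∈ Set.Ico (1/2 : ℝ) 1) :
    ∀ s : Fin 2, ∃! βd : ℝ,
      βd ∈ Set.Ioo (betaOf μ a_l) (betaOf μ b_l) ∧
      ∀ β : ℝ, betaOf μ a_h < β → β < 1 → ((zOf μ β : ℝ) : EReal) < b_h →
        ((β < βd → H fh μ s β - H fl μ s β > 0) ∧
         (β = βd → H fh μ s β - H fl μ s β = 0) ∧
         (βd < β → H fh μ s β - H fl μ s β < 0)) := by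
  intro s
  have hμ' : μ ∈ Ioo 0 1 := ⟨by linarith [hμ.1], hμ.2⟩
  obtain ⟨ld, hld, hsign⟩ := exists_sign_cdfOf_sub_eq (hh.isDensityOn_fs s)
    (hl.isDensityOn_fs s) hab hbb fun ℓ hℓ => by
      simpa only [Fs_eq_cdfOf] using (hdom s ℓ hℓ.1 hℓ.2).1
  have hld₀ : 0 ≤ ld := hl.a_nonneg.trans hld.1.le
  have hb₀ : 0 ≤ b_l := hld₀.trans hld.2.le
  have hH : ∀ β, betaOf μ a_h < β → β < 1 → ((zOf μ β : ℝ) : EReal) < b_h →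
      SignType.sign (H fh μ s β - H fl μ s β) = SignType.sign (betaOf μ ld - β) :=
    fun β h₁ h₂ h₃ => by
      rw [H, H, Fs_eq_cdfOf, Fs_eq_cdfOf, hsign _ ((lt_zOf_iff hμ' hh.a_nonneg h₂).2 h₁) h₃,
        sign_sub_zOf hμ' hld₀ h₂]
  refine ⟨betaOf μ ld, ⟨⟨strictMonoOn_betaOf hμ' hl.a_nonneg hld₀ hld.1,
    strictMonoOn_betaOf hμ' hld₀ hb₀ hld.2⟩,
    fun β h₁ h₂ h₃ => lt_and_eq_and_gt_of_sign_eq (hH β h₁ h₂ h₃)⟩, fun y ⟨hy, hyH⟩ => ?_⟩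
  have h₁ : betaOf μ a_h < y :=
    (strictMonoOn_betaOf hμ' hh.a_nonneg hl.a_nonneg hab).trans hy.1
  have h₂ : y < 1 := hy.2.trans (betaOf_lt_one hμ' hb₀)
  have h₃ : ((zOf μ y : ℝ) : EReal) < b_h :=
    (EReal.coe_lt_coe_iff.2 ((zOf_lt_iff hμ' hb₀ h₂).2 hy.2)).trans hbb
  have hy₀ := hH y h₁ h₂ h₃
  rw [(hyH y h₁ h₂ h₃).2.1 rfl, sign_zero, eq_comm, sign_eq_zero_iff, sub_eq_zero] at hy₀
  exact hy₀.symm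
end

section
/- Let f_h and f_l be likelihood-ratio experiments on [a_h,b_h] and [a_l,b_l] (0 ≤ a_h < a_l < b_l < b_h ≤ ∞), with state-s CDFs F_{t,s}. Fix p ∈ (0,1), μ ∈ [1/2,1), and β ∈ (0,1/2], and set z = (1−μ)β/(μ(1−β)). If z ∈ (a_l, b_l), then p·F_{h,0}(z) + (1−p)·F_{l,0}(z) > (μ/(1−μ))·( p·F_{h,1}(z) + (1−p)·F_{l,1}(z) ). -/
open MeasureTheory Set

/-! Since `u ≤ z` on `[0, z]`, every experiment has `F₁(z) ≤ z·F₀(z)`, strictly so for the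
low experiment because its density is positive somewhere in `(a_l, z)`. Mixing with weight
`p` keeps the strict inequality, and `(μ/(1−μ))·z = β/(1−β) ≤ 1` because `β ≤ 1/2`. -/

lemma Continuous.nonneg_of_nonneg_off_countable {f : ℝ → ℝ} (hf : Continuous f) {s : Set ℝ}
    (hs : s.Countable) (h : ∀ x ∉ s, 0 ≤ f x) (x : ℝ) : 0 ≤ f x := by
  have hcl : closure sᶜ ⊆ {x | 0 ≤ f x} :=
    (isClosed_le continuous_const hf).closure_subset_iff.mpr h
  exact hcl ((hs.dense_compl ℝ).closure_eq ▸ mem_univ x)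

namespace IsLRExperiment

variable {f : ℝ → ℝ} {a : ℝ} {b : EReal}

lemma nonneg (h : IsLRExperiment f a b) (x : ℝ) : 0 ≤ f x := by
  refine h.cont.nonneg_of_nonneg_off_countable (s := {a, b.toReal}) (by simp) ?_ x
  intro x hx
  simp only [mem_insert_iff, mem_singleton_iff, not_or] at hx
  obtain ⟨hxa, hxb⟩ := hx
  rcases Ne.lt_or_gt hxa with hlt | hgt
  · exact (h.zero_outside x (Or.inl hlt)).ge
  rcases lt_trichotomy (x : EReal) b with hlt | heq | hgt'
  · exact (h.pos x hgt hlt).le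
  · exact absurd (by rw [← heq, EReal.toReal_coe]) hxb
  · exact (h.zero_outside x (Or.inr hgt')).ge

end IsLRExperiment

section CDF

variable {f : ℝ → ℝ} {z : ℝ}

lemma F0_nonneg (hf : ∀ u, 0 ≤ f u) (hz : 0 ≤ z) : 0 ≤ F0 f z :=
  intervalIntegral.integral_nonneg hz fun u _ => hf u

lemma F1_le_mul_F0 (hf : Continuous f) (hf₀ : ∀ u, 0 ≤ f u) (hz : 0 ≤ z) :
    F1 f z ≤ z * F0 f z := by
  rw [F1, F0, ← intervalIntegral.integral_const_mul]
  exact intervalIntegral.integral_mono_on hz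
    ((continuous_id.mul hf).intervalIntegrable 0 z)
    ((continuous_const.mul hf).intervalIntegrable 0 z)
    fun u hu => mul_le_mul_of_nonneg_right hu.2 (hf₀ u)

lemma F1_lt_mul_F0 (hf : Continuous f) (hf₀ : ∀ u, 0 ≤ f u)
    {u : ℝ} (hu : u ∈ Ico 0 z) (hfu : 0 < f u) : F1 f z < z * F0 f z := by
  rw [F1, F0, ← intervalIntegral.integral_const_mul]
  exact intervalIntegral.integral_lt_integral_of_continuousOn_of_le_of_exists_lt
    (hu.1.trans_lt hu.2) (continuous_id.mul hf).continuousOn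
    (continuous_const.mul hf).continuousOn
    (fun v hv => mul_le_mul_of_nonneg_right hv.2 (hf₀ v))
    ⟨u, Ico_subset_Icc_self hu, mul_lt_mul_of_pos_right hu.2 hfu⟩

end CDF

lemma odds_mul_cutoff_le_one {μ β : ℝ} (hμ₀ : 0 < μ) (hμ₁ : μ < 1) (hβ : β ≤ 1 / 2) :
    μ / (1 - μ) * ((1 - μ) * β / (μ * (1 - β))) ≤ 1 := by
  have hβ₁ : 0 < 1 - β := by linarith
  calc μ / (1 - μ) * ((1 - μ) * β / (μ * (1 - β))) = β / (1 - β) := by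
        field_simp [hμ₀.ne', (sub_pos.mpr hμ₁).ne']
    _ ≤ 1 := (div_le_one hβ₁).mpr (by linarith)

theorem stmt_11_general (fh fl : ℝ → ℝ) (a_h a_l b_l : ℝ) (b_h : EReal)
    (hh : IsLRExperiment fh a_h b_h) (hl : IsLRExperiment fl a_l (b_l : EReal))
    (p : ℝ) (hp : p ∈ Set.Ioo (0:ℝ) 1)
    (μ : ℝ) (hμ : μ ∈ Set.Ico (1/2 : ℝ) 1)
    (β : ℝ) (hβ : β ∈ Set.Ioc (0:ℝ) (1/2)) :
    ∀ z : ℝ, z = (1 - μ) * β / (μ * (1 - β)) → a_l < z → z < b_l →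
      p * F0 fh z + (1 - p) * F0 fl z
        > μ / (1 - μ) * (p * F1 fh z + (1 - p) * F1 fl z) := by
  intro z hz hz₁ hz₂
  obtain ⟨hp₀, hp₁⟩ := hp
  have hz₀ : 0 < z := hl.a_nonneg.trans_lt hz₁
  have hμ₀ : 0 < μ := by linarith [hμ.1]
  have hodds : 0 < μ / (1 - μ) := div_pos hμ₀ (sub_pos.mpr hμ.2)
  have hodds_z : μ / (1 - μ) * z ≤ 1 := hz ▸ odds_mul_cutoff_le_one hμ₀ hμ.2 hβ.2
  have hlow : F1 fl z < z * F0 fl z :=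
    F1_lt_mul_F0 hl.cont hl.nonneg (u := (a_l + z) / 2)
      ⟨by linarith [hl.a_nonneg], by linarith⟩
      (hl.pos _ (by linarith) (by exact_mod_cast (show (a_l + z) / 2 < b_l by linarith)))
  have hhigh : F1 fh z ≤ z * F0 fh z := F1_le_mul_F0 hh.cont hh.nonneg hz₀.le
  have hmix₀ : 0 ≤ p * F0 fh z + (1 - p) * F0 fl z :=
    add_nonneg (mul_nonneg hp₀.le (F0_nonneg hh.nonneg hz₀.le))
      (mul_nonneg (by linarith) (F0_nonneg hl.nonneg hz₀.le))
  calc μ / (1 - μ) * (p * F1 fh z + (1 - p) * F1 fl z)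
      < μ / (1 - μ) * (p * (z * F0 fh z) + (1 - p) * (z * F0 fl z)) :=
        mul_lt_mul_of_pos_left (add_lt_add_of_le_of_lt (mul_le_mul_of_nonneg_left hhigh hp₀.le)
          (mul_lt_mul_of_pos_left hlow (sub_pos.mpr hp₁))) hodds
    _ = μ / (1 - μ) * z * (p * F0 fh z + (1 - p) * F0 fl z) := by ring
    _ ≤ p * F0 fh z + (1 - p) * F0 fl z := mul_le_of_le_one_left hmix₀ hodds_z

/-- After a contrarian report under a belief cutoff `β ≤ 1/2`, the receiver's posterior
odds of state 0 strictly exceed `μ/(1−μ)`: with `z = (1−μ)β/(μ(1−β))`, if `z ∈ (a_l,b_l)`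
then `p·F_{h,0}(z) + (1−p)·F_{l,0}(z) > (μ/(1−μ))·(p·F_{h,1}(z) + (1−p)·F_{l,1}(z))`. -/
theorem stmt_11 (fh fl : ℝ → ℝ) (a_h a_l b_l : ℝ) (b_h : EReal)
    (hh : IsLRExperiment fh a_h b_h) (hl : IsLRExperiment fl a_l (b_l : EReal))
    (hab : a_h < a_l) (hbb : (b_l : EReal) < b_h)
    (p : ℝ) (hp : p ∈ Set.Ioo (0:ℝ) 1)
    (μ : ℝ) (hμ : μ ∈ Set.Ico (1/2 : ℝ) 1)
    (β : ℝ) (hβ : β ∈ Set.Ioc (0:ℝ) (1/2)) :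
    ∀ z : ℝ, z = (1 - μ) * β / (μ * (1 - β)) → a_l < z → z < b_l →
      p * F0 fh z + (1 - p) * F0 fl z
        > μ / (1 - μ) * (p * F1 fh z + (1 - p) * F1 fl z) :=
  stmt_11_general fh fl a_h a_l b_l b_h hh hl p hp μ hμ β hβ
end

section
/- Let g₀, g₁ : [0,1] → ℝ be continuous and positive, with G_s(y) = ∫₀^y g_s(u) du satisfying G₀(1) = G₁(1) = 1, and suppose λ(y) = g₁(y)/g₀(y) is strictly increasing on [0,1]. Assume the symmetry condition G₀(y) = 1 − G₁(1−y) for all y ∈ [0,1]. Define F_s(ℓ) = G_s(λ⁻¹(ℓ)) for ℓ ∈ [λ(0), λ(1)]. Then λ(0)·λ(1) = 1, λ(1−y) = 1/λ(y) for all y ∈ [0,1], and F₀(ℓ) = 1 − F₁(1/ℓ) for all ℓ ∈ [λ(0), λ(1)]. -/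
/-!
Differentiating the symmetry `G₀(y) = 1 − G₁(1−y)` gives `g₀(y) = g₁(1−y)` on the open interval,
and by continuity on `[0,1]`. Hence `λ(1−y) = g₁(1−y)/g₀(1−y) = g₀(y)/g₁(y) = 1/λ(y)`, so the
reflection `y ↦ 1 − y` of signals becomes the inversion `ℓ ↦ 1/ℓ` of likelihood ratios, and
`F₀(ℓ) = G₀(y) = 1 − G₁(1−y) = 1 − F₁(1/ℓ)` for `y = λ⁻¹(ℓ)`.
-/

open MeasureTheory Set

theorem hasDerivAt_integral_of_continuousOn_Icc {f : ℝ → ℝ} {a b c x : ℝ}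
    (hf : ContinuousOn f (Icc a b)) (hc : c ∈ Icc a b) (hx : x ∈ Ioo a b) :
    HasDerivAt (fun y => ∫ u in c..y, f u) (f x) x :=
  intervalIntegral.integral_hasDerivAt_right
    (hf.mono (uIcc_subset_Icc hc (Ioo_subset_Icc_self hx))).intervalIntegrable
    ((hf.mono Ioo_subset_Icc_self).stronglyMeasurableAtFilter isOpen_Ioo x hx)
    (hf.continuousAt (Icc_mem_nhds hx.1 hx.2))

theorem eqOn_reflect_of_integral_eq_sub_integral_reflect {g₀ g₁ : ℝ → ℝ} {C : ℝ}
    (hg₀ : ContinuousOn g₀ (Icc 0 1)) (hg₁ : ContinuousOn g₁ (Icc 0 1))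
    (hsym : ∀ y ∈ Icc (0:ℝ) 1, ∫ u in (0:ℝ)..y, g₀ u = C - ∫ u in (0:ℝ)..(1 - y), g₁ u) :
    EqOn g₀ (fun y => g₁ (1 - y)) (Icc 0 1) := by
  have hzero : (0:ℝ) ∈ Icc 0 1 := left_mem_Icc.2 zero_le_one
  have hinterior : EqOn g₀ (fun y => g₁ (1 - y)) (Ioo 0 1) := by
    intro y hy
    have hderiv₀ := hasDerivAt_integral_of_continuousOn_Icc hg₀ hzero hy
    have hderiv₁ : HasDerivAt (fun x => C - ∫ u in (0:ℝ)..(1 - x), g₁ u) (g₁ (1 - y)) y := by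
      simpa using ((hasDerivAt_integral_of_continuousOn_Icc hg₁ hzero
        (Ioo.mem_iff_one_sub_mem.1 hy)).comp y ((hasDerivAt_id y).const_sub 1)).const_sub C
    refine hderiv₀.unique (hderiv₁.congr_of_eventuallyEq ?_)
    filter_upwards [Icc_mem_nhds hy.1 hy.2] with x hx using hsym x hx
  refine hinterior.of_subset_closure hg₀ (hg₁.comp (continuousOn_const.sub continuousOn_id)
    fun y hy => Icc.mem_iff_one_sub_mem.1 hy) Ioo_subset_Icc_self ?_
  rw [closure_Ioo zero_ne_one]

theorem stmt_12_general (g0 g1 : ℝ → ℝ)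
    (hg0c : ContinuousOn g0 (Icc 0 1)) (hg1c : ContinuousOn g1 (Icc 0 1))
    (hg0p : ∀ y ∈ Icc (0:ℝ) 1, 0 < g0 y)
    (G0 G1 : ℝ → ℝ)
    (hG0 : ∀ y : ℝ, G0 y = ∫ u in (0:ℝ)..y, g0 u)
    (hG1 : ∀ y : ℝ, G1 y = ∫ u in (0:ℝ)..y, g1 u)
    (lam : ℝ → ℝ) (hlam : ∀ y : ℝ, lam y = g1 y / g0 y)
    (hsym : ∀ y ∈ Icc (0:ℝ) 1, G0 y = 1 - G1 (1 - y))
    (laminv : ℝ → ℝ)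
    (hinv1 : ∀ y ∈ Icc (0:ℝ) 1, laminv (lam y) = y)
    (hinv2 : ∀ ℓ ∈ Icc (lam 0) (lam 1),
      laminv ℓ ∈ Icc (0:ℝ) 1 ∧ lam (laminv ℓ) = ℓ) :
    lam 0 * lam 1 = 1 ∧
    (∀ y ∈ Icc (0:ℝ) 1, lam (1 - y) = 1 / lam y) ∧
    (∀ ℓ ∈ Icc (lam 0) (lam 1), G0 (laminv ℓ) = 1 - G1 (laminv (1 / ℓ))) := by
  have hg_reflect : EqOn g0 (fun y => g1 (1 - y)) (Icc 0 1) :=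
    eqOn_reflect_of_integral_eq_sub_integral_reflect hg0c hg1c fun y hy => by
      rw [← hG0, ← hG1]; exact hsym y hy
  have hg1_reflect : ∀ y ∈ Icc (0:ℝ) 1, g1 y = g0 (1 - y) := fun y hy => by
    simpa using (hg_reflect (Icc.mem_iff_one_sub_mem.1 hy)).symm
  have hlam_reflect : ∀ y ∈ Icc (0:ℝ) 1, lam (1 - y) = 1 / lam y := fun y hy => by
    rw [hlam, hlam, hg_reflect hy, hg1_reflect y hy, one_div_div]
  refine ⟨?_, hlam_reflect, ?_⟩
  · have h0 : (0:ℝ) ∈ Icc 0 1 := left_mem_Icc.2 zero_le_one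
    have hlam0 : lam 0 ≠ 0 := by
      rw [hlam, hg1_reflect 0 h0, sub_zero]
      exact div_ne_zero (hg0p 1 (right_mem_Icc.2 zero_le_one)).ne' (hg0p 0 h0).ne'
    have hlam1 : lam 1 = 1 / lam 0 := by simpa using hlam_reflect 0 h0
    rw [hlam1, mul_one_div_cancel hlam0]
  · intro ℓ hℓ
    obtain ⟨hy, hlam_y⟩ := hinv2 ℓ hℓ
    have hinv_reflect : laminv (1 / ℓ) = 1 - laminv ℓ := by
      rw [← hinv1 _ (Icc.mem_iff_one_sub_mem.1 hy), hlam_reflect _ hy, hlam_y]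
    rw [hinv_reflect]
    exact hsym _ hy

/-- Under the monotone likelihood ratio property, mirror-image symmetry of the signal
distributions (`G₀(y) = 1 − G₁(1−y)`) translates into the likelihood-ratio form of
symmetry: `λ(0)·λ(1) = 1`, `λ(1−y) = 1/λ(y)`, and `F₀(ℓ) = 1 − F₁(1/ℓ)` where
`F_s(ℓ) = G_s(λ⁻¹(ℓ))` is the induced CDF of the likelihood ratio `ℓ`. -/
theorem stmt_12 (g0 g1 : ℝ → ℝ)
    (hg0c : ContinuousOn g0 (Icc 0 1)) (hg1c : ContinuousOn g1 (Icc 0 1))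
    (hg0p : ∀ y ∈ Icc (0:ℝ) 1, 0 < g0 y) (hg1p : ∀ y ∈ Icc (0:ℝ) 1, 0 < g1 y)
    (G0 G1 : ℝ → ℝ)
    (hG0 : ∀ y : ℝ, G0 y = ∫ u in (0:ℝ)..y, g0 u)
    (hG1 : ∀ y : ℝ, G1 y = ∫ u in (0:ℝ)..y, g1 u)
    (hG0one : G0 1 = 1) (hG1one : G1 1 = 1)
    (lam : ℝ → ℝ) (hlam : ∀ y : ℝ, lam y = g1 y / g0 y)
    (hmono : StrictMonoOn lam (Icc 0 1))
    (hsym : ∀ y ∈ Icc (0:ℝ) 1, G0 y = 1 - G1 (1 - y))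
    (laminv : ℝ → ℝ)
    (hinv1 : ∀ y ∈ Icc (0:ℝ) 1, laminv (lam y) = y)
    (hinv2 : ∀ ℓ ∈ Icc (lam 0) (lam 1),
      laminv ℓ ∈ Icc (0:ℝ) 1 ∧ lam (laminv ℓ) = ℓ) :
    lam 0 * lam 1 = 1 ∧
    (∀ y ∈ Icc (0:ℝ) 1, lam (1 - y) = 1 / lam y) ∧
    (∀ ℓ ∈ Icc (lam 0) (lam 1), G0 (laminv ℓ) = 1 - G1 (laminv (1 / ℓ))) :=
  stmt_12_general g0 g1 hg0c hg1c hg0p G0 G1 hG0 hG1 lam hlam hsym laminv hinv1 hinv2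
end

section
/- For each integer k ≥ 1, set b_k = k/(k² − k + 1), f_k(ℓ) = (1−1/k)·k·e^{−kℓ} + (1/k)·b_k·e^{−b_k ℓ}, F_k(ℓ) = ∫₀^ℓ f_k(u) du, and T_k(ℓ) = ∫₀^ℓ u·f_k(u) du. Then for every ℓ > 0: (i) f_k(ℓ)/(1−F_k(ℓ)) ≤ (k² − k)·e^{(b_k − k)ℓ} + b_k for every k ≥ 1; and (ii) as k → ∞, each of f_k(ℓ)/(1−F_k(ℓ)), f_k(ℓ)/F_k(ℓ), ℓ·f_k(ℓ)/T_k(ℓ), and ℓ·f_k(ℓ)/(1−T_k(ℓ)) converges to 0. -/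
open MeasureTheory Set

/-- The small exponential rate `b_k = k/(k² − k + 1)` of the hyperexponential
experiment. -/
noncomputable def bHE (k : ℕ) : ℝ := (k : ℝ) / ((k : ℝ)^2 - (k : ℝ) + 1)

/-- State-0 density of the simple hyperexponential experiment of parameter `k`:
`f_k(ℓ) = (1 − 1/k)·k·e^{−kℓ} + (1/k)·b_k·e^{−b_k ℓ}`. -/
noncomputable def fHE (k : ℕ) (ℓ : ℝ) : ℝ :=
  (1 - 1/(k : ℝ)) * (k : ℝ) * Real.exp (-(k : ℝ) * ℓ)
    + (1/(k : ℝ)) * bHE k * Real.exp (-(bHE k) * ℓ)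

/-- State-0 CDF of the hyperexponential experiment. -/
noncomputable def FHE (k : ℕ) (ℓ : ℝ) : ℝ := ∫ u in (0:ℝ)..ℓ, fHE k u

/-- State-1 CDF of the hyperexponential experiment. -/
noncomputable def THE (k : ℕ) (ℓ : ℝ) : ℝ := ∫ u in (0:ℝ)..ℓ, u * fHE k u


/-!
Write `p = 1 - 1/k` and `b = b_k`. Integrating the two exponentials gives
`1 - F_k(ℓ) = p e^{-kℓ} + e^{-bℓ}/k`; dropping the fast term bounds the hazard rate by
`k f_k(ℓ) e^{bℓ} = (k² - k) e^{(b-k)ℓ} + b`, which is (i). Since `kⁿ e^{-kℓ} → 0`, `b → 0` and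
`k b → 1`, this bound tends to `0`, and `f_k(ℓ) → 0`, `F_k(ℓ) → 1`, `T_k(ℓ) → 0`, which handles the
two quotients whose denominators tend to `1`. For `ℓ f_k / T_k`, whose denominator vanishes too,
the fast component alone gives `T_k(ℓ) ≥ p (1 - (kℓ + 1) e^{-kℓ}) / k`, while
`k f_k(ℓ) = p k² e^{-kℓ} + b e^{-bℓ} → 0`.
-/

open Filter Real Topology

theorem integral_exp_neg_mul {a : ℝ} (ha : a ≠ 0) (x : ℝ) :
    ∫ u in (0:ℝ)..x, exp (-a * u) = (1 - exp (-a * x)) / a := by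
  rw [intervalIntegral.integral_comp_mul_left (fun u => exp u) (neg_ne_zero.2 ha), integral_exp]
  simp only [mul_zero, exp_zero, smul_eq_mul]
  field_simp
  ring

theorem integral_mul_exp_neg_mul {a : ℝ} (ha : a ≠ 0) (x : ℝ) :
    ∫ u in (0:ℝ)..x, u * exp (-a * u) = (1 - (a * x + 1) * exp (-a * x)) / a ^ 2 := by
  have hderiv : ∀ u ∈ uIcc (0:ℝ) x, HasDerivAt
      (fun u => -((a * u + 1) * exp (-a * u)) / a ^ 2) (u * exp (-a * u)) u := by
    intro u _
    refine (((((hasDerivAt_id u).const_mul a).add_const 1).mul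
      ((hasDerivAt_id u).const_mul (-a)).exp).neg.div_const (a ^ 2)).congr_deriv ?_
    simp only [id]
    field_simp
    ring
  rw [intervalIntegral.integral_eq_sub_of_hasDerivAt hderiv
    (Continuous.intervalIntegrable (by fun_prop) _ _)]
  simp only [mul_zero, zero_add, exp_zero]
  field_simp
  ring

theorem add_one_mul_exp_neg_le_one (x : ℝ) : (x + 1) * exp (-x) ≤ 1 := by
  rw [exp_neg, ← div_eq_mul_inv, div_le_one (exp_pos x)]
  exact add_one_le_exp x

theorem tendsto_div_nhds_zero_of_le_denom {α : Type*} {l : Filter α} {f g h : α → ℝ}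
    (hf : ∀ᶠ x in l, 0 ≤ f x) (hh : ∀ᶠ x in l, 0 < h x) (hhg : ∀ᶠ x in l, h x ≤ g x)
    (hlim : Tendsto (fun x => f x / h x) l (𝓝 0)) :
    Tendsto (fun x => f x / g x) l (𝓝 0) := by
  refine squeeze_zero' ?_ ?_ hlim
  · filter_upwards [hf, hh, hhg] with x hfx hhx hhgx
    exact div_nonneg hfx (hhx.trans_le hhgx).le
  · filter_upwards [hf, hh, hhg] with x hfx hhx hhgx
    exact div_le_div_of_nonneg_left hfx hhx hhgx

theorem bHE_denom_pos (k : ℕ) : (0:ℝ) < (k:ℝ) ^ 2 - k + 1 := by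
  nlinarith [sq_nonneg ((k:ℝ) - 1/2)]

theorem bHE_nonneg (k : ℕ) : 0 ≤ bHE k :=
  div_nonneg k.cast_nonneg (bHE_denom_pos k).le

theorem bHE_pos {k : ℕ} (hk : k ≠ 0) : 0 < bHE k :=
  div_pos (by positivity) (bHE_denom_pos k)

theorem one_sub_one_div_natCast_nonneg (k : ℕ) : (0:ℝ) ≤ 1 - 1 / k := by
  rcases k.eq_zero_or_pos with rfl | hk
  · simp
  · exact sub_nonneg.2 (div_le_one_of_le₀ (by exact_mod_cast hk) k.cast_nonneg)

theorem fHE_nonneg (k : ℕ) (ℓ : ℝ) : 0 ≤ fHE k ℓ := by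
  have := one_sub_one_div_natCast_nonneg k
  have := bHE_nonneg k
  unfold fHE
  positivity

theorem natCast_mul_fHE {k : ℕ} (hk : k ≠ 0) (ℓ : ℝ) :
    k * fHE k ℓ = (1 - 1 / k) * (k:ℝ) ^ 2 * exp (-(k:ℝ) * ℓ) + bHE k * exp (-bHE k * ℓ) := by
  unfold fHE
  field_simp

theorem one_sub_FHE {k : ℕ} (hk : k ≠ 0) (ℓ : ℝ) :
    1 - FHE k ℓ = (1 - 1 / k) * exp (-(k:ℝ) * ℓ) + 1 / k * exp (-bHE k * ℓ) := by
  have hint : ∀ a : ℝ, IntervalIntegrable (fun u => exp (-a * u)) volume 0 ℓ :=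
    fun a => Continuous.intervalIntegrable (by fun_prop) _ _
  have hb := (bHE_pos hk).ne'
  simp only [FHE, fHE]
  rw [intervalIntegral.integral_add ((hint _).const_mul _) ((hint _).const_mul _),
    intervalIntegral.integral_const_mul, intervalIntegral.integral_const_mul,
    integral_exp_neg_mul (by positivity), integral_exp_neg_mul hb]
  field_simp
  ring

theorem THE_eq {k : ℕ} (hk : k ≠ 0) (ℓ : ℝ) :
    THE k ℓ = (1 - 1 / k) * (1 - (k * ℓ + 1) * exp (-(k:ℝ) * ℓ)) / k
      + (1 - (bHE k * ℓ + 1) * exp (-bHE k * ℓ)) / (k * bHE k) := by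
  have hint : ∀ a : ℝ, IntervalIntegrable (fun u => u * exp (-a * u)) volume 0 ℓ :=
    fun a => Continuous.intervalIntegrable (by fun_prop) _ _
  have hsplit : ∀ u, u * fHE k u = (1 - 1 / k) * k * (u * exp (-(k:ℝ) * u))
      + 1 / k * bHE k * (u * exp (-bHE k * u)) := fun u => by unfold fHE; ring
  have hb := (bHE_pos hk).ne'
  simp only [THE, hsplit]
  rw [intervalIntegral.integral_add ((hint _).const_mul _) ((hint _).const_mul _),
    intervalIntegral.integral_const_mul, intervalIntegral.integral_const_mul,
    integral_mul_exp_neg_mul (by positivity), integral_mul_exp_neg_mul hb]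
  field_simp

theorem fHE_div_eq {k : ℕ} (hk : k ≠ 0) (ℓ : ℝ) :
    fHE k ℓ / (1 / k * exp (-bHE k * ℓ))
      = ((k:ℝ) ^ 2 - k) * exp ((bHE k - k) * ℓ) + bHE k := by
  rw [div_eq_iff (by positivity), show (bHE k - k) * ℓ = -k * ℓ - (-bHE k * ℓ) by ring,
    exp_sub]
  unfold fHE
  field_simp

theorem one_div_mul_exp_le_one_sub_FHE {k : ℕ} (hk : k ≠ 0) (ℓ : ℝ) :
    1 / k * exp (-bHE k * ℓ) ≤ 1 - FHE k ℓ := by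
  rw [one_sub_FHE hk]
  have := one_sub_one_div_natCast_nonneg k
  have : 0 ≤ (1 - 1 / (k:ℝ)) * exp (-(k:ℝ) * ℓ) := by positivity
  linarith

theorem fHE_div_one_sub_FHE_le {k : ℕ} (hk : k ≠ 0) (ℓ : ℝ) :
    fHE k ℓ / (1 - FHE k ℓ) ≤ ((k:ℝ) ^ 2 - k) * exp ((bHE k - k) * ℓ) + bHE k :=
  fHE_div_eq hk ℓ ▸ div_le_div_of_nonneg_left (fHE_nonneg k ℓ) (by positivity)
    (one_div_mul_exp_le_one_sub_FHE hk ℓ)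

theorem one_sub_one_div_mul_le_THE {k : ℕ} (hk : k ≠ 0) (ℓ : ℝ) :
    (1 - 1 / k) * (1 - (k * ℓ + 1) * exp (-(k:ℝ) * ℓ)) / k ≤ THE k ℓ := by
  rw [THE_eq hk]
  have := bHE_nonneg k
  have := sub_nonneg.2 (add_one_mul_exp_neg_le_one (bHE k * ℓ))
  rw [← neg_mul] at this
  have : 0 ≤ (1 - (bHE k * ℓ + 1) * exp (-bHE k * ℓ)) / (k * bHE k) := by positivity
  linarith

theorem tendsto_bHE : Tendsto bHE atTop (𝓝 0) := by
  refine squeeze_zero bHE_nonneg (fun k => ?_) (tendsto_const_div_atTop_nhds_zero_nat 2)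
  rcases k.eq_zero_or_pos with rfl | hk
  · simp [bHE]
  · rw [bHE, div_le_div_iff₀ (bHE_denom_pos k) (by exact_mod_cast hk)]
    nlinarith [sq_nonneg ((k:ℝ) - 1)]

theorem tendsto_natCast_mul_bHE : Tendsto (fun k : ℕ => k * bHE k) atTop (𝓝 1) := by
  have hinv := tendsto_one_div_atTop_nhds_zero_nat (𝕜 := ℝ)
  have := ((tendsto_const_nhds (x := (1:ℝ))).sub hinv).add (hinv.mul hinv) |>.inv₀ (by norm_num)
  simp only [sub_zero, add_zero, mul_zero, inv_one] at this
  refine this.congr' ?_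
  filter_upwards [eventually_ne_atTop 0] with k hk
  have := (bHE_denom_pos k).ne'
  rw [bHE]
  field_simp

theorem tendsto_exp_neg_bHE_mul (x : ℝ) :
    Tendsto (fun k => exp (-bHE k * x)) atTop (𝓝 1) := by
  have := (continuous_exp.tendsto _).comp (tendsto_bHE.neg.mul_const x)
  simpa only [neg_zero, zero_mul, exp_zero, Function.comp_def] using this

theorem tendsto_one_sub_one_div_natCast :
    Tendsto (fun k : ℕ => 1 - 1 / (k:ℝ)) atTop (𝓝 1) := by
  simpa using (tendsto_const_nhds (x := (1:ℝ))).sub tendsto_one_div_atTop_nhds_zero_nat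

section Limits

variable {ℓ : ℝ}

theorem tendsto_natCast_pow_mul_exp_neg_mul (hℓ : 0 < ℓ) (n : ℕ) :
    Tendsto (fun k : ℕ => (k:ℝ) ^ n * exp (-(k:ℝ) * ℓ)) atTop (𝓝 0) := by
  have := ((tendsto_pow_mul_exp_neg_atTop_nhds_zero n).comp
    (tendsto_natCast_atTop_atTop.atTop_mul_const hℓ)).const_mul (ℓ ^ n)⁻¹
  rw [mul_zero] at this
  refine this.congr fun k => ?_
  simp only [Function.comp, mul_pow, neg_mul]
  field_simp

theorem tendsto_fHE (hℓ : 0 < ℓ) : Tendsto (fun k => fHE k ℓ) atTop (𝓝 0) := by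
  have := (tendsto_one_sub_one_div_natCast.mul (tendsto_natCast_pow_mul_exp_neg_mul hℓ 1)).add
    ((tendsto_one_div_atTop_nhds_zero_nat.mul tendsto_bHE).mul (tendsto_exp_neg_bHE_mul ℓ))
  simp only [mul_zero, zero_mul, add_zero, pow_one] at this
  exact this.congr fun k => by unfold fHE; ring

theorem tendsto_natCast_mul_fHE (hℓ : 0 < ℓ) :
    Tendsto (fun k : ℕ => k * fHE k ℓ) atTop (𝓝 0) := by
  have := (tendsto_one_sub_one_div_natCast.mul (tendsto_natCast_pow_mul_exp_neg_mul hℓ 2)).add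
    (tendsto_bHE.mul (tendsto_exp_neg_bHE_mul ℓ))
  simp only [mul_zero, zero_mul, add_zero] at this
  refine this.congr' ?_
  filter_upwards [eventually_ne_atTop 0] with k hk
  rw [natCast_mul_fHE hk, mul_assoc]

theorem tendsto_FHE (hℓ : 0 < ℓ) : Tendsto (fun k => FHE k ℓ) atTop (𝓝 1) := by
  have := (tendsto_one_sub_one_div_natCast.mul (tendsto_natCast_pow_mul_exp_neg_mul hℓ 0)).add
    (tendsto_one_div_atTop_nhds_zero_nat.mul (tendsto_exp_neg_bHE_mul ℓ))
  simp only [mul_zero, zero_mul, add_zero, pow_zero, one_mul] at this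
  have h1F := (tendsto_const_nhds (x := (1:ℝ))).sub this
  rw [sub_zero] at h1F
  refine h1F.congr' ?_
  filter_upwards [eventually_ne_atTop 0] with k hk
  rw [← one_sub_FHE hk, sub_sub_cancel]

theorem tendsto_one_sub_add_one_mul_exp_neg_natCast_mul (hℓ : 0 < ℓ) :
    Tendsto (fun k : ℕ => 1 - (k * ℓ + 1) * exp (-(k:ℝ) * ℓ)) atTop (𝓝 1) := by
  have := ((tendsto_natCast_pow_mul_exp_neg_mul hℓ 1).mul_const ℓ).add
    (tendsto_natCast_pow_mul_exp_neg_mul hℓ 0)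
  have := (tendsto_const_nhds (x := (1:ℝ))).sub this
  simp only [zero_mul, add_zero, sub_zero] at this
  exact this.congr fun k => by ring

theorem tendsto_THE (hℓ : 0 < ℓ) : Tendsto (fun k => THE k ℓ) atTop (𝓝 0) := by
  have hfast := (tendsto_one_sub_one_div_natCast.mul
    (tendsto_one_sub_add_one_mul_exp_neg_natCast_mul hℓ)).div_atTop
    tendsto_natCast_atTop_atTop
  have hslow := (tendsto_const_nhds (x := (1:ℝ))).sub
    (((tendsto_bHE.mul_const ℓ).add_const 1).mul (tendsto_exp_neg_bHE_mul ℓ))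
    |>.div tendsto_natCast_mul_bHE one_ne_zero
  have := hfast.add hslow
  simp only [zero_mul, zero_add, mul_one, sub_self, zero_div, add_zero, Pi.div_apply] at this
  refine this.congr' ?_
  filter_upwards [eventually_ne_atTop 0] with k hk
  rw [THE_eq hk]

theorem tendsto_fHE_div_one_sub_FHE (hℓ : 0 < ℓ) :
    Tendsto (fun k => fHE k ℓ / (1 - FHE k ℓ)) atTop (𝓝 0) := by
  refine tendsto_div_nhds_zero_of_le_denom (h := fun k => 1 / k * exp (-bHE k * ℓ))
    (.of_forall fun k => fHE_nonneg k ℓ) ?_ ?_ ?_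
  · filter_upwards [eventually_ne_atTop 0] with k hk
    positivity
  · filter_upwards [eventually_ne_atTop 0] with k hk
    exact one_div_mul_exp_le_one_sub_FHE hk ℓ
  have := (((tendsto_natCast_pow_mul_exp_neg_mul hℓ 2).sub
    (tendsto_natCast_pow_mul_exp_neg_mul hℓ 1)).mul (tendsto_exp_neg_bHE_mul (-ℓ))).add
    tendsto_bHE
  simp only [sub_zero, zero_mul, add_zero] at this
  refine this.congr' ?_
  filter_upwards [eventually_ne_atTop 0] with k hk
  rw [fHE_div_eq hk, show (bHE k - k) * ℓ = -k * ℓ + -bHE k * -ℓ by ring, exp_add]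
  ring

theorem tendsto_fHE_div_FHE (hℓ : 0 < ℓ) :
    Tendsto (fun k => fHE k ℓ / FHE k ℓ) atTop (𝓝 0) := by
  simpa [Pi.div_def] using (tendsto_fHE hℓ).div (tendsto_FHE hℓ) one_ne_zero

theorem tendsto_mul_fHE_div_THE (hℓ : 0 < ℓ) :
    Tendsto (fun k => ℓ * fHE k ℓ / THE k ℓ) atTop (𝓝 0) := by
  have hfast := tendsto_one_sub_one_div_natCast.mul
    (tendsto_one_sub_add_one_mul_exp_neg_natCast_mul hℓ)
  rw [one_mul] at hfast
  refine tendsto_div_nhds_zero_of_le_denom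
    (h := fun k => (1 - 1 / k) * (1 - (k * ℓ + 1) * exp (-(k:ℝ) * ℓ)) / k)
    (.of_forall fun k => mul_nonneg hℓ.le (fHE_nonneg k ℓ)) ?_ ?_ ?_
  · filter_upwards [hfast.eventually_const_lt one_pos, eventually_ne_atTop 0] with k hpos hk
    positivity
  · filter_upwards [eventually_ne_atTop 0] with k hk
    exact one_sub_one_div_mul_le_THE hk ℓ
  have := ((tendsto_natCast_mul_fHE hℓ).const_mul ℓ).div hfast one_ne_zero
  rw [mul_zero, zero_div] at this
  refine this.congr fun k => ?_
  rw [Pi.div_apply, div_div_eq_mul_div, mul_right_comm, mul_assoc]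

theorem tendsto_mul_fHE_div_one_sub_THE (hℓ : 0 < ℓ) :
    Tendsto (fun k => ℓ * fHE k ℓ / (1 - THE k ℓ)) atTop (𝓝 0) := by
  have := ((tendsto_fHE hℓ).const_mul ℓ).div ((tendsto_THE hℓ).const_sub 1) (by norm_num)
  simpa [Pi.div_def] using this

end Limits

/-- The hazard rate of the hyperexponential experiment in state 0 is bounded by
`(k² − k)e^{(b_k − k)ℓ} + b_k`, and all four hazard/reverse-hazard rates (in states 0
and 1) vanish pointwise as `k → ∞`. -/
theorem stmt_17 (ℓ : ℝ) (hℓ : 0 < ℓ) :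
    (∀ k : ℕ, 1 ≤ k →
      fHE k ℓ / (1 - FHE k ℓ)
        ≤ ((k : ℝ)^2 - (k : ℝ)) * Real.exp ((bHE k - (k : ℝ)) * ℓ) + bHE k) ∧
    Filter.Tendsto (fun k : ℕ => fHE k ℓ / (1 - FHE k ℓ)) Filter.atTop (nhds 0) ∧
    Filter.Tendsto (fun k : ℕ => fHE k ℓ / FHE k ℓ) Filter.atTop (nhds 0) ∧
    Filter.Tendsto (fun k : ℕ => ℓ * fHE k ℓ / THE k ℓ) Filter.atTop (nhds 0) ∧
    Filter.Tendsto (fun k : ℕ => ℓ * fHE k ℓ / (1 - THE k ℓ)) Filter.atTop (nhds 0) :=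
  ⟨fun _ hk => fHE_div_one_sub_FHE_le (Nat.one_le_iff_ne_zero.mp hk) ℓ,
    tendsto_fHE_div_one_sub_FHE hℓ, tendsto_fHE_div_FHE hℓ, tendsto_mul_fHE_div_THE hℓ,
    tendsto_mul_fHE_div_one_sub_THE hℓ⟩
end
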